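/- Let k ≥ 2, n > 5k², and let G be a graph of order n with q(G) ≥ q(S_{n,k}). Then the number of edges of G satisfies e(G) ≥ kn − k² + 1. -/

import Mathlib

open Finset

def Snk (n k : ℕ) : SimpleGraph (Fin n) where
  Adj i j := i ≠ j ∧ (i.val < k ∨ j.val < k)
  symm := ⟨fun i j h => ⟨h.1.symm, h.2.symm⟩⟩
  loopless := ⟨fun i h => h.1 rfl⟩

instance SnkDec (n k : ℕ) : DecidableRel (Snk n k).Adj :=
  fun i j => inferInstanceAs (Decidable (i ≠ j ∧ (i.val < k ∨ j.val < k)))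

def signlessLaplacian {n : ℕ} (G : SimpleGraph (Fin n)) [DecidableRel G.Adj] :
    Matrix (Fin n) (Fin n) ℝ :=
  Matrix.diagonal (fun i => (G.degree i : ℝ)) + G.adjMatrix ℝ

noncomputable def qIndex {n : ℕ} (G : SimpleGraph (Fin n)) [DecidableRel G.Adj] : ℝ :=
  sSup (spectrum ℝ (signlessLaplacian G))

def HasPathOn {V : Type*} (G : SimpleGraph V) (m : ℕ) : Prop :=
  ∃ f : Fin m → V, Function.Injective f ∧
    ∀ (i : ℕ) (h : i + 1 < m), G.Adj (f ⟨i, by omega⟩) (f ⟨i + 1, h⟩)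

def HasCycleOn {V : Type*} (G : SimpleGraph V) (m : ℕ) : Prop :=
  ∃ f : ZMod m → V, Function.Injective f ∧ ∀ i, G.Adj (f i) (f (i + 1))

/-!
The larger root `ρ` of `ρ² - (n + 2k - 2)ρ + 2k(k - 1)` is an eigenvalue of the signless
Laplacian of `S_{n,k}`, with an eigenvector constant on the clique and on the independent set.
Since `ρ > n - 1`, `q(S_{n,k}) ≥ ρ = n + 2k - 2 - 2k(k - 1)/ρ > n + 2k - 2 - 2k(k - 1)/(n - 1)`.

On the other side stands the Feng–Yu bound `q(G) ≤ 2e(G)/(n - 1) + n - 2`, which for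
`e(G) ≤ kn - k²` is exactly `n + 2k - 2 - 2k(k - 1)/(n - 1)`. It follows from Das's bound
`q(G) ≤ max_u (d_u + m_u)`, `m_u` the average degree of the neighbours of `u` (test the
eigen-equation for `|x|` at a vertex maximising `|x_u| / d_u`), and the two estimates
`Σ_{v ~ u} d_v ≤ d_u (n - 1)` and `Σ_{v ~ u} d_v ≤ d_u² + Σ_{w ∉ N[u]} d_w`.
-/

namespace Matrix

variable {ι K : Type*} [Fintype ι] [DecidableEq ι] [Field K]

theorem mem_spectrum_iff_exists_mulVec_eq_smul {A : Matrix ι ι K} {μ : K} :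
    μ ∈ spectrum K A ↔ ∃ v ≠ 0, A.mulVec v = μ • v := by
  rw [← spectrum_toLin', ← Module.End.hasEigenvalue_iff_mem_spectrum,
    Module.End.hasEigenvalue_iff]
  simp [Submodule.ne_bot_iff, and_comm]

end Matrix

namespace SimpleGraph

variable {V : Type*} [Fintype V] (G : SimpleGraph V) [DecidableRel G.Adj]

theorem sum_degree_neighborFinset_le_mul (u : V) :
    ∑ v ∈ G.neighborFinset u, G.degree v ≤ G.degree u * (Fintype.card V - 1) := by
  rw [← card_neighborFinset_eq_degree G u, ← smul_eq_mul]
  exact sum_le_card_nsmul _ _ _ fun v _ => Nat.le_sub_one_of_lt (G.degree_lt_card_verts v)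

theorem exists_degree_pos_mul_degree_le {μ : ℝ} (hμ : 0 < μ) {y : V → ℝ} (hy0 : ∀ v, 0 ≤ y v)
    (hy : y ≠ 0) (hsub : ∀ u, μ * y u ≤ G.degree u * y u + ∑ v ∈ G.neighborFinset u, y v) :
    ∃ u, 0 < G.degree u ∧
      μ * G.degree u ≤ (G.degree u : ℝ) ^ 2 + ∑ v ∈ G.neighborFinset u, (G.degree v : ℝ) := by
  have hdeg : ∀ v, 0 < y v → 0 < G.degree v := fun v hv => by
    by_contra! h0
    have hN : G.neighborFinset v = ∅ := by
      rw [← card_eq_zero, card_neighborFinset_eq_degree]; omega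
    have := hsub v
    simp only [hN, Nat.le_zero.1 h0, sum_empty, Nat.cast_zero, zero_mul, add_zero] at this
    nlinarith
  obtain ⟨v₀, hv₀⟩ : ∃ v, 0 < y v := by
    by_contra! h
    exact hy (funext fun v => le_antisymm (h v) (hy0 v))
  -- the junk value `y v / 0 = 0` is harmless: the maximum of `y / degree` is positive
  obtain ⟨u, -, hmax⟩ := exists_max_image univ (fun v => y v / G.degree v) ⟨v₀, mem_univ _⟩
  have hpos : 0 < y u / G.degree u :=
    (div_pos hv₀ (by exact_mod_cast hdeg v₀ hv₀)).trans_le (hmax v₀ (mem_univ _))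
  have hdu : (0 : ℝ) < G.degree u := by
    by_contra! h
    simp [le_antisymm h (Nat.cast_nonneg _)] at hpos
  have hyu : 0 < y u := (div_pos_iff_of_pos_right hdu).1 hpos
  refine ⟨u, by exact_mod_cast hdu, le_of_mul_le_mul_right ?_ hyu⟩
  have hnbr : ∀ v ∈ G.neighborFinset u, G.degree u * y v ≤ y u * G.degree v := fun v hv => by
    have hdv : (0 : ℝ) < G.degree v := by
      exact_mod_cast (G.degree_pos_iff_exists_adj v).2 ⟨u, ((G.mem_neighborFinset u v).1 hv).symm⟩
    have := hmax v (mem_univ _)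
    rw [div_le_div_iff₀ hdv hdu] at this
    linarith
  calc μ * G.degree u * y u = G.degree u * (μ * y u) := by ring
    _ ≤ G.degree u * (G.degree u * y u + ∑ v ∈ G.neighborFinset u, y v) :=
      mul_le_mul_of_nonneg_left (hsub u) hdu.le
    _ = G.degree u ^ 2 * y u + ∑ v ∈ G.neighborFinset u, G.degree u * y v := by
      rw [mul_add, mul_sum]; ring
    _ ≤ G.degree u ^ 2 * y u + ∑ v ∈ G.neighborFinset u, y u * G.degree v :=
      add_le_add_right (sum_le_sum hnbr) _
    _ = _ := by rw [← mul_sum]; ring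

variable [DecidableEq V]

theorem sum_degree_neighborFinset_le_sq_add (u : V) :
    ∑ v ∈ G.neighborFinset u, G.degree v ≤
      G.degree u ^ 2 + ∑ w ∈ (insert u (G.neighborFinset u))ᶜ, G.degree w := by
  set N := G.neighborFinset u
  have hcount : ∑ v ∈ N, G.degree v = ∑ w, #{v ∈ N | G.Adj v w} := by
    simp only [← card_neighborFinset_eq_degree, neighborFinset_eq_filter, card_filter]
    exact sum_comm
  have hself : #{v ∈ N | G.Adj v u} ≤ G.degree u :=
    (card_filter_le _ _).trans (card_neighborFinset_eq_degree G u).le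
  have hnbr : ∀ w ∈ N, #{v ∈ N | G.Adj v w} ≤ G.degree u - 1 := fun w hw => by
    rw [← card_neighborFinset_eq_degree, ← card_erase_of_mem hw]
    exact card_le_card fun v hv => by
      simp only [mem_filter] at hv
      exact mem_erase.2 ⟨hv.2.ne, hv.1⟩
  have hfar : ∀ w, #{v ∈ N | G.Adj v w} ≤ G.degree w := fun w => by
    rw [← card_neighborFinset_eq_degree]
    exact card_le_card fun v hv => by simpa [adj_comm] using (mem_filter.1 hv).2
  have hunot : u ∉ N := by simp [N]
  rw [hcount, ← sum_add_sum_compl (insert u N), sum_insert hunot]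
  have hN : ∑ w ∈ N, #{v ∈ N | G.Adj v w} ≤ G.degree u * (G.degree u - 1) := by
    rw [← card_neighborFinset_eq_degree G u, ← smul_eq_mul]
    exact sum_le_card_nsmul _ _ _ hnbr
  have hsq : G.degree u + G.degree u * (G.degree u - 1) = G.degree u ^ 2 := by
    rcases G.degree u with _ | d
    · rfl
    · rw [Nat.add_sub_cancel]; ring
  have := sum_le_sum fun w (_ : w ∈ (insert u N)ᶜ) => hfar w
  omega

theorem degree_add_sum_degree_neighborFinset_add_sum_compl (u : V) :
    G.degree u + ∑ v ∈ G.neighborFinset u, G.degree v +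
      ∑ w ∈ (insert u (G.neighborFinset u))ᶜ, G.degree w = 2 * #G.edgeFinset := by
  rw [← sum_degrees_eq_twice_card_edges, ← sum_add_sum_compl (insert u (G.neighborFinset u)),
    sum_insert (by simp)]

theorem card_sub_one_mul_degree_sq_add_sum_le (u : V) :
    ((Fintype.card V : ℝ) - 1) * (G.degree u ^ 2 + ∑ v ∈ G.neighborFinset u, (G.degree v : ℝ)) ≤
      G.degree u * (2 * #G.edgeFinset + ((Fintype.card V : ℝ) - 1) * (Fintype.card V - 2)) := by
  set X := (insert u (G.neighborFinset u))ᶜ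
  have hcard : Fintype.card V = G.degree u + #X + 1 := by
    rw [card_compl, card_insert_of_notMem (by simp), card_neighborFinset_eq_degree]
    have := G.degree_lt_card_verts u
    omega
  have hsq := G.sum_degree_neighborFinset_le_sq_add u
  have hmul := G.sum_degree_neighborFinset_le_mul u
  rw [hcard, Nat.add_sub_cancel] at hmul
  have hsum : (G.degree u : ℝ) + ∑ v ∈ G.neighborFinset u, (G.degree v : ℝ) +
      ∑ w ∈ X, (G.degree w : ℝ) = 2 * #G.edgeFinset := by
    exact_mod_cast G.degree_add_sum_degree_neighborFinset_add_sum_compl u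
  rw [← hsum, hcard]
  simp only [← Nat.cast_sum]
  generalize G.degree u = d, #X = x, ∑ v ∈ G.neighborFinset u, G.degree v = T,
    ∑ w ∈ X, G.degree w = R at hsq hmul ⊢
  -- after substituting `2 e(G) = d + T + R`, the claim is `x T ≤ d R + d x (d + x - 1)`
  have key : x * T + d * x ≤ d * R + d * x * (d + x) := by
    rcases le_total d x with h | h
    · obtain ⟨t, rfl⟩ := Nat.exists_eq_add_of_le h
      nlinarith [Nat.mul_le_mul_left d hsq, Nat.mul_le_mul_left t hmul, Nat.le_mul_self d]
    · nlinarith [Nat.mul_le_mul_left x hsq, Nat.le_mul_self x, Nat.mul_le_mul_right R h]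
  replace key := (Nat.cast_le (α := ℝ)).2 key
  push_cast at key ⊢
  linarith

end SimpleGraph

section SignlessLaplacian

variable {n : ℕ} (G : SimpleGraph (Fin n)) [DecidableRel G.Adj]

theorem signlessLaplacian_mulVec_apply (x : Fin n → ℝ) (u : Fin n) :
    (signlessLaplacian G).mulVec x u = G.degree u * x u + ∑ v ∈ G.neighborFinset u, x v := by
  rw [signlessLaplacian, Matrix.add_mulVec, Pi.add_apply, Matrix.mulVec_diagonal,
    SimpleGraph.adjMatrix_mulVec_apply]

theorem exists_degree_pos_mul_degree_le_of_mem_spectrum {μ : ℝ} (hμ : 0 < μ)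
    (hspec : μ ∈ spectrum ℝ (signlessLaplacian G)) :
    ∃ u, 0 < G.degree u ∧
      μ * G.degree u ≤ (G.degree u : ℝ) ^ 2 + ∑ v ∈ G.neighborFinset u, (G.degree v : ℝ) := by
  obtain ⟨x, hx, hxμ⟩ := Matrix.mem_spectrum_iff_exists_mulVec_eq_smul.1 hspec
  refine G.exists_degree_pos_mul_degree_le hμ (y := fun v => |x v|) (fun v => abs_nonneg _)
    (fun h => hx (funext fun v => abs_eq_zero.1 (congrFun h v))) fun u => ?_
  have hu : μ * x u = G.degree u * x u + ∑ v ∈ G.neighborFinset u, x v := by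
    rw [← signlessLaplacian_mulVec_apply, hxμ, Pi.smul_apply, smul_eq_mul]
  calc μ * |x u| = |G.degree u * x u + ∑ v ∈ G.neighborFinset u, x v| := by
        rw [← hu, abs_mul, abs_of_pos hμ]
    _ ≤ |G.degree u * x u| + |∑ v ∈ G.neighborFinset u, x v| := abs_add_le _ _
    _ ≤ G.degree u * |x u| + ∑ v ∈ G.neighborFinset u, |x v| := by
      rw [abs_mul, Nat.abs_cast]
      exact add_le_add_right (abs_sum_le_sum_abs _ _) _

theorem le_of_mem_spectrum_signlessLaplacian (hn : 2 ≤ n) {μ : ℝ}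
    (hspec : μ ∈ spectrum ℝ (signlessLaplacian G)) :
    μ ≤ 2 * #G.edgeFinset / ((n : ℝ) - 1) + n - 2 := by
  have h2n : (2 : ℝ) ≤ n := by exact_mod_cast hn
  have hn1 : (0 : ℝ) < n - 1 := by linarith
  rcases le_or_gt μ 0 with hμ | hμ
  · have : (0 : ℝ) ≤ 2 * #G.edgeFinset / ((n : ℝ) - 1) := by positivity
    linarith
  obtain ⟨u, hdu, hμu⟩ := exists_degree_pos_mul_degree_le_of_mem_spectrum G hμ hspec
  replace hdu : (0 : ℝ) < G.degree u := by exact_mod_cast hdu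
  have hvert := G.card_sub_one_mul_degree_sq_add_sum_le u
  rw [Fintype.card_fin] at hvert
  rw [add_sub_assoc, div_add' _ _ _ hn1.ne', le_div_iff₀ hn1]
  refine le_of_mul_le_mul_left ?_ hdu
  nlinarith

theorem qIndex_le (hn : 2 ≤ n) :
    qIndex G ≤ 2 * #G.edgeFinset / ((n : ℝ) - 1) + n - 2 := by
  refine Real.sSup_le (fun μ hμ => le_of_mem_spectrum_signlessLaplacian G hn hμ) ?_
  have : (2 : ℝ) ≤ n := by exact_mod_cast hn
  have : (0 : ℝ) ≤ 2 * #G.edgeFinset / ((n : ℝ) - 1) := div_nonneg (by positivity) (by linarith)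
  linarith

end SignlessLaplacian

theorem le_qIndex_of_mem_spectrum {n : ℕ} {G : SimpleGraph (Fin n)} [DecidableRel G.Adj] {μ : ℝ}
    (hμ : μ ∈ spectrum ℝ (signlessLaplacian G)) : μ ≤ qIndex G :=
  le_csSup (Matrix.finite_spectrum _).bddAbove hμ

section Snk

variable {n k : ℕ}

theorem Snk_adj {i j : Fin n} : (Snk n k).Adj i j ↔ i ≠ j ∧ (i.val < k ∨ j.val < k) := Iff.rfl

theorem Snk_neighborFinset_of_lt {i : Fin n} (hi : i.val < k) :
    (Snk n k).neighborFinset i = univ.erase i := by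
  ext j
  simp [Snk_adj, hi, eq_comm]

theorem Snk_neighborFinset_of_le {i : Fin n} (hi : k ≤ i.val) :
    (Snk n k).neighborFinset i = ({j | j.val < k} : Finset (Fin n)) := by
  ext j
  simp only [SimpleGraph.mem_neighborFinset, Snk_adj, mem_filter, mem_univ, true_and]
  constructor
  · rintro ⟨-, h | h⟩ <;> omega
  · exact fun hj => ⟨fun h => by omega, Or.inr hj⟩

theorem Snk_degree_of_lt {i : Fin n} (hi : i.val < k) : (Snk n k).degree i = n - 1 := by
  rw [← SimpleGraph.card_neighborFinset_eq_degree, Snk_neighborFinset_of_lt hi,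
    card_erase_of_mem (mem_univ i), card_univ, Fintype.card_fin]

theorem Snk_degree_of_le (hkn : k ≤ n) {i : Fin n} (hi : k ≤ i.val) : (Snk n k).degree i = k := by
  rw [← SimpleGraph.card_neighborFinset_eq_degree, Snk_neighborFinset_of_le hi,
    Fin.card_filter_val_lt, min_eq_right hkn]

theorem signlessLaplacian_Snk_mulVec (hkn : k ≤ n) {ρ : ℝ}
    (hρ : ρ ^ 2 - (n + 2 * k - 2) * ρ + 2 * k * (k - 1) = 0) :
    (signlessLaplacian (Snk n k)).mulVec (fun i => if i.val < k then ρ - k else k) =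
      ρ • fun i => if i.val < k then ρ - k else (k : ℝ) := by
  have hcard : #{j : Fin n | j.val < k} = k := by rw [Fin.card_filter_val_lt, min_eq_right hkn]
  have hcard' : #{j : Fin n | ¬ j.val < k} = n - k := by
    rw [filter_not, card_sdiff_of_subset (filter_subset _ _), hcard, card_univ, Fintype.card_fin]
  funext i
  rw [signlessLaplacian_mulVec_apply, Pi.smul_apply, smul_eq_mul]
  by_cases hi : i.val < k
  · rw [Snk_neighborFinset_of_lt hi, Snk_degree_of_lt hi, sum_erase_eq_sub (mem_univ i),
      sum_ite, sum_const, sum_const, hcard, hcard']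
    simp only [hi, if_true, nsmul_eq_mul]
    push_cast [show 1 ≤ n from i.pos, hkn]
    linear_combination -hρ
  · rw [Snk_neighborFinset_of_le (not_lt.1 hi), Snk_degree_of_le hkn (not_lt.1 hi)]
    rw [sum_congr rfl fun j hj => if_pos (mem_filter.1 hj).2, sum_const, hcard]
    simp only [hi, if_false, nsmul_eq_mul]
    ring

end Snk

theorem exists_quadratic_root_gt {n k : ℝ} (hk : 1 < k) (hkn : k + 1 ≤ n) :
    ∃ ρ : ℝ, ρ ^ 2 - (n + 2 * k - 2) * ρ + 2 * k * (k - 1) = 0 ∧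
      n + 2 * k - 2 - 2 * k * (k - 1) / (n - 1) < ρ := by
  set b := n + 2 * k - 2
  set c := 2 * k * (k - 1)
  have hc : 0 < c := by positivity
  have hdisc : 0 ≤ b ^ 2 - 4 * c := by nlinarith
  set ρ := (b + √(b ^ 2 - 4 * c)) / 2 with hρdef
  have hsqrt := Real.sq_sqrt hdisc
  have hroot : ρ * (b - ρ) = c := by linear_combination -hsqrt / 4
  have hρ' : b - ρ ≤ ρ := by linarith [Real.sqrt_nonneg (b ^ 2 - 4 * c)]
  -- `n - 1` lies strictly between the two roots `b - ρ ≤ ρ`, as the quadratic is negative there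
  have hρ : n - 1 < ρ := by
    by_contra! h
    nlinarith [mul_nonneg (sub_nonneg.2 h) (sub_nonneg.2 (hρ'.trans h))]
  refine ⟨ρ, by linear_combination -hroot, ?_⟩
  have hbρ : b - ρ = c / ρ := by rw [eq_div_iff (by linarith)]; linear_combination hroot
  linarith [div_lt_div_of_pos_left hc (by linarith) hρ]

theorem lt_qIndex_Snk {n k : ℕ} (hk : 2 ≤ k) (hkn : k < n) :
    (n : ℝ) + 2 * k - 2 - 2 * k * (k - 1) / (n - 1) < qIndex (Snk n k) := by
  obtain ⟨ρ, hρ, hlt⟩ := exists_quadratic_root_gt (n := n) (k := k) (by exact_mod_cast hk)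
    (by exact_mod_cast hkn)
  refine hlt.trans_le (le_qIndex_of_mem_spectrum (Matrix.mem_spectrum_iff_exists_mulVec_eq_smul.2
    ⟨_, fun h => ?_, signlessLaplacian_Snk_mulVec hkn.le hρ⟩))
  have := congrFun h ⟨k, hkn⟩
  simp only [lt_self_iff_false, if_false, Pi.zero_apply, Nat.cast_eq_zero] at this
  omega

theorem stmt6 {n k : ℕ} (hk : 2 ≤ k) (hn : 5 * k ^ 2 < n) (G : SimpleGraph (Fin n))
    [DecidableRel G.Adj] (hq : qIndex (Snk n k) ≤ qIndex G) :
    (k : ℝ) * n - (k : ℝ) ^ 2 + 1 ≤ (G.edgeFinset.card : ℝ) := by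
  have hkn : k < n := by nlinarith
  have hn1 : (0 : ℝ) < n - 1 := by
    have : (k : ℝ) < n := by exact_mod_cast hkn
    have : (2 : ℝ) ≤ k := by exact_mod_cast hk
    linarith
  by_contra! hlt
  have he : (#G.edgeFinset : ℝ) ≤ k * n - k ^ 2 := by
    have : (#G.edgeFinset : ℤ) < k * n - k ^ 2 + 1 := by exact_mod_cast hlt
    exact_mod_cast Int.lt_add_one_iff.1 this
  have hfengyu : 2 * #G.edgeFinset / ((n : ℝ) - 1) + n - 2 ≤
      n + 2 * k - 2 - 2 * k * (k - 1) / (n - 1) := by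
    have hrhs : (n : ℝ) + 2 * k - 2 - 2 * k * (k - 1) / (n - 1) =
        2 * (k * n - k ^ 2) / (n - 1) + n - 2 := by
      field_simp
      ring
    rw [hrhs]
    gcongr
  linarith [qIndex_le G (by omega), lt_qIndex_Snk hk hkn]
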